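/- Let G be a simple graph on n vertices, {a,b} an edge of G, and G' = G − {a,b}. Let G* and G'_* be the augmented graphs of G and G' (sharing the universal vertex u*), let M* be a Moore–Penrose pseudoinverse of L_{G*}, and let r* = M*[a,a] − 2·M*[a,b] + M*[b,b]. If r* ≠ 1, then the marginal loss of the forest index satisfies R_f(G') − R_f(G) = (n/(1 − r*))·Σ_{w ∈ V∪{u*}} (M*[w,a] − M*[w,b])² − ((n+1)/(1 − r*))·(M*[u*,a] − M*[u*,b])². -/

import Mathlib

open Matrix BigOperators

/-- `M` is a Moore–Penrose pseudoinverse of `L`. -/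
def IsMoorePenrose {n : Type*} [Fintype n] (L M : Matrix n n ℝ) : Prop :=
  L * M * L = L ∧ M * L * M = M ∧ (L * M)ᵀ = L * M ∧ (M * L)ᵀ = M * L

/-- The augmented graph `G*` of `G`: a new universal vertex `none` is joined
to every vertex of `G`. -/
def augment {V : Type*} (G : SimpleGraph V) : SimpleGraph (Option V) :=
  SimpleGraph.fromRel fun x y =>
    (∃ u v, x = some u ∧ y = some v ∧ G.Adj u v) ∨ x = none ∨ y = none

instance augmentAdjDecidable {V : Type*} [Fintype V] [DecidableEq V]
    (G : SimpleGraph V) [DecidableRel G.Adj] : DecidableRel (augment G).Adj :=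
  fun x y => decidable_of_iff' _ (SimpleGraph.fromRel_adj _ x y)

instance deleteEdgeAdjDecidable {V : Type*} [DecidableEq V]
    (G : SimpleGraph V) [DecidableRel G.Adj] (a b : V) :
    DecidableRel (G.deleteEdges {s(a, b)}).Adj := fun x y =>
  decidable_of_iff (G.Adj x y ∧ ¬s(x, y) = s(a, b)) (by simp)

/-- The forest index `R_f(G) = ∑_{u<v} (Ω[u,u] - 2 Ω[u,v] + Ω[v,v])`,
where `Ω = (L_G + I)⁻¹` is the forest matrix. -/
noncomputable def forestIndex {n : ℕ} (G : SimpleGraph (Fin n)) [DecidableRel G.Adj] : ℝ :=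
  ∑ u : Fin n, ∑ v ∈ Finset.Ioi u,
    ((G.lapMatrix ℝ + 1)⁻¹ u u - 2 * (G.lapMatrix ℝ + 1)⁻¹ u v + (G.lapMatrix ℝ + 1)⁻¹ v v)

/-!
Up to padding, the Moore–Penrose pseudoinverse of `L_{G*}` is the forest matrix
`Ω = (L_G + I)⁻¹`: the zero-padded `Ω`, projected on both sides onto the complement of the
constant vectors, satisfies the Penrose equations, which determine the pseudoinverse uniquely.
Hence the column difference `M[·,a] - M[·,b]` is `g = Ω (e_a - e_b)` padded by `0` at `u*`,
and `r* = (e_a - e_b) ⬝ g`. Deleting the edge subtracts `(e_a - e_b)(e_a - e_b)ᵀ` from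
`L_G + I`, so by Sherman–Morrison `Ω' = Ω + g gᵀ / (1 - r*)` and each forest distance `f(u,v)`
grows by `(g_u - g_v)² / (1 - r*)`. Summing over pairs gives `n ∑ g_u² - (∑ g_u)²`, and
`∑ g_u = 0` since `Ω` has unit column sums.
-/

namespace IsMoorePenrose

variable {ι : Type*} [Fintype ι] {L M N : Matrix ι ι ℝ}

theorem unique (hM : IsMoorePenrose L M) (hN : IsMoorePenrose L N) : M = N := by
  obtain ⟨hM₁, hM₂, hM₃, hM₄⟩ := hM
  obtain ⟨hN₁, hN₂, hN₃, hN₄⟩ := hN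
  have hL : L * M = L * N :=
    calc L * M = ((L * M) * (L * N))ᵀ := by
            rw [transpose_mul, hM₃, hN₃, ← Matrix.mul_assoc, hN₁]
      _ = (L * N)ᵀ := by rw [← Matrix.mul_assoc, hM₁]
      _ = L * N := hN₃
  have hR : M * L = N * L :=
    calc M * L = ((N * L) * (M * L))ᵀ := by
            rw [transpose_mul, hM₄, hN₄, Matrix.mul_assoc, ← Matrix.mul_assoc L N L, hN₁]
      _ = (N * L)ᵀ := by rw [Matrix.mul_assoc, ← Matrix.mul_assoc L M L, hM₁]
      _ = N * L := hN₄
  calc M = M * L * M := hM₂.symm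
    _ = N * L * N := by rw [hR, Matrix.mul_assoc, hL, ← Matrix.mul_assoc]
    _ = N := hN₂

theorem of_isSymm (hL : L.IsSymm) (hN : N.IsSymm) (hLN : (L * N).IsSymm)
    (h₁ : L * N * L = L) (h₂ : L * N * N = N) : IsMoorePenrose L N := by
  have hNL : N * L = L * N := by rw [← hLN.eq, transpose_mul, hL.eq, hN.eq]
  exact ⟨h₁, by rwa [hNL], hLN, hNL ▸ hLN⟩

end IsMoorePenrose

namespace Matrix

section ShermanMorrison

variable {ι K : Type*} [Fintype ι] [DecidableEq ι] [Field K]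

theorem inv_sub_vecMulVec {A : Matrix ι ι K} (hA : IsUnit A) (u v : ι → K)
    (h : v ⬝ᵥ (A⁻¹ *ᵥ u) ≠ 1) :
    (A - vecMulVec u v)⁻¹ =
      A⁻¹ + (1 - v ⬝ᵥ (A⁻¹ *ᵥ u))⁻¹ • vecMulVec (A⁻¹ *ᵥ u) (v ᵥ* A⁻¹) := by
  set r := v ⬝ᵥ (A⁻¹ *ᵥ u)
  have hA' : A * A⁻¹ = 1 := mul_nonsing_inv A ((isUnit_iff_isUnit_det A).mp hA)
  have hr : (1 - r)⁻¹ * (1 - r) = 1 := inv_mul_cancel₀ (sub_ne_zero.mpr h.symm)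
  refine inv_eq_right_inv ?_
  rw [sub_mul, mul_add, mul_add, hA', Matrix.mul_smul, Matrix.mul_smul, mul_vecMulVec,
    mulVec_mulVec, hA', one_mulVec, vecMulVec_mul, mul_vecMulVec, vecMulVec_mulVec,
    op_smul_eq_smul, smul_vecMulVec, smul_smul, add_sub_assoc, add_eq_left]
  calc _ = ((1 - r)⁻¹ * (1 - r) - 1) • vecMulVec u (v ᵥ* A⁻¹) := by module
    _ = 0 := by rw [hr, sub_self, zero_smul]

end ShermanMorrison

section Centering

variable (ι : Type*) [Fintype ι]

noncomputable def centering [DecidableEq ι] : Matrix ι ι ℝ :=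
  1 - (Fintype.card ι : ℝ)⁻¹ • vecMulVec 1 1

variable {ι} [DecidableEq ι]

theorem isSymm_centering : (centering ι).IsSymm := by
  rw [IsSymm, centering, transpose_sub, transpose_smul, transpose_vecMulVec, transpose_one]

theorem one_vecMul_centering [Nonempty ι] : 1 ᵥ* centering ι = 0 := by
  have : (Fintype.card ι : ℝ) ≠ 0 := Nat.cast_ne_zero.mpr Fintype.card_ne_zero
  rw [centering, vecMul_sub, vecMul_smul, vecMul_vecMulVec, vecMul_one, dotProduct_one,
    smul_smul]
  simp [this]

theorem centering_mulVec_of_dotProduct_eq_zero {x : ι → ℝ} (hx : 1 ⬝ᵥ x = 0) :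
    centering ι *ᵥ x = x := by
  rw [centering, sub_mulVec, smul_mulVec, vecMulVec_mulVec, hx]
  simp

theorem centering_mul_of_vecMul_eq_zero {A : Matrix ι ι ℝ} (hA : 1 ᵥ* A = 0) :
    centering ι * A = A := by
  rw [centering, Matrix.sub_mul, Matrix.smul_mul, vecMulVec_mul, hA]
  simp

theorem mul_centering_of_mulVec_eq_zero {A : Matrix ι ι ℝ} (hA : A *ᵥ 1 = 0) :
    A * centering ι = A := by
  rw [centering, Matrix.mul_sub, Matrix.mul_smul, mul_vecMulVec, hA]
  simp

theorem centering_mul_centering [Nonempty ι] : centering ι * centering ι = centering ι :=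
  centering_mul_of_vecMul_eq_zero one_vecMul_centering

end Centering

section ExtendZero

variable {V R : Type*}

section Zero

variable [Zero R]

def extendZero (A : Matrix V V R) : Matrix (Option V) (Option V) R :=
  of fun x y => match x, y with
    | some u, some v => A u v
    | _, _ => 0

@[simp] theorem extendZero_some_some (A : Matrix V V R) (u v : V) :
    extendZero A (some u) (some v) = A u v := rfl

@[simp] theorem extendZero_none (A : Matrix V V R) (y : Option V) :
    extendZero A none y = 0 := rfl

@[simp] theorem extendZero_apply_none (A : Matrix V V R) (x : Option V) :
    extendZero A x none = 0 := by
  cases x <;> rfl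

theorem transpose_extendZero (A : Matrix V V R) : (extendZero A)ᵀ = extendZero Aᵀ := by
  ext (_ | _) (_ | _) <;> rfl

end Zero

theorem extendZero_mulVec [NonUnitalNonAssocSemiring R] [Fintype V] (A : Matrix V V R)
    (x : V → R) :
    extendZero A *ᵥ Option.elim' 0 x = Option.elim' 0 (A *ᵥ x) := by
  ext (_ | u) <;> simp [mulVec, dotProduct, Fintype.sum_option]

end ExtendZero

end Matrix

namespace Finset

variable {ι R : Type*} [Fintype ι] [LinearOrder ι] [LocallyFiniteOrderTop ι]

theorem two_mul_sum_sum_Ioi [NonAssocSemiring R] {F : ι → ι → R} (hF : ∀ u v, F u v = F v u)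
    (hF₀ : ∀ u, F u u = 0) : 2 * ∑ u, ∑ v ∈ Ioi u, F u v = ∑ u, ∑ v, F u v := by
  have hIoi (u : ι) : ∑ v ∈ Ioi u, F u v = ∑ v, if u < v then F u v else 0 := by
    rw [← filter_lt_eq_Ioi, sum_filter]
  have hswap :
      ∑ u, ∑ v, (if u < v then F u v else 0) = ∑ u, ∑ v, if v < u then F u v else 0 := by
    rw [sum_comm]
    exact sum_congr rfl fun v _ => sum_congr rfl fun u _ => by rw [hF]
  simp only [hIoi]
  rw [two_mul]
  nth_rw 2 [hswap]
  rw [← sum_add_distrib]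
  refine sum_congr rfl fun u _ => ?_
  rw [← sum_add_distrib]
  refine sum_congr rfl fun v _ => ?_
  rcases lt_trichotomy u v with h | rfl | h
  · simp [h, h.not_gt]
  · simp [hF₀]
  · simp [h, h.not_gt]

theorem sum_sum_Ioi_sub_sq (g : ι → ℝ) :
    ∑ u, ∑ v ∈ Ioi u, (g u - g v) ^ 2 = Fintype.card ι * ∑ u, g u ^ 2 - (∑ u, g u) ^ 2 := by
  refine mul_left_cancel₀ (two_ne_zero (α := ℝ)) ?_
  rw [two_mul_sum_sum_Ioi (fun u v => by ring) (fun u => by ring)]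
  simp only [sub_sq, sum_add_distrib, sum_sub_distrib, sum_const, card_univ, nsmul_eq_mul,
    mul_assoc, ← mul_sum, ← sum_mul]
  ring

end Finset

namespace SimpleGraph

variable {V : Type*} {G : SimpleGraph V}

@[simp] theorem augment_adj_some_some {u v : V} :
    (augment G).Adj (some u) (some v) ↔ G.Adj u v := by
  simp only [augment, fromRel_adj, ne_eq, Option.some.injEq, reduceCtorEq, or_false,
    exists_and_left, exists_eq_left']
  exact ⟨fun ⟨_, h⟩ => h.elim id .symm, fun h => ⟨h.ne, .inl h⟩⟩

@[simp] theorem augment_adj_some_none (u : V) : (augment G).Adj (some u) none := by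
  simp [augment]

@[simp] theorem augment_adj_none_some (v : V) : (augment G).Adj none (some v) := by
  simp [augment]

variable {R : Type*} [DecidableEq V] [Ring R]

theorem ite_adj_eq_ite_adj_deleteEdges_add [DecidableRel G.Adj] {a b : V} (hab : G.Adj a b)
    (i j : V) :
    (if G.Adj i j then (1 : R) else 0) = (if (G.deleteEdges {s(a, b)}).Adj i j then 1 else 0) +
      ((Pi.single a 1 : V → R) i * (Pi.single b 1 : V → R) j +
        (Pi.single b 1 : V → R) i * (Pi.single a 1 : V → R) j) := by
  by_cases hij : s(i, j) = s(a, b)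
  · rcases Sym2.eq_iff.mp hij with ⟨rfl, rfl⟩ | ⟨rfl, rfl⟩ <;>
      simp [hab, hab.symm, hab.ne, hab.ne.symm]
  · simp only [deleteEdges_adj, Set.mem_singleton_iff, hij, not_false_eq_true, and_true,
      Pi.single_apply]
    split_ifs <;> simp_all

variable [Fintype V] [DecidableRel G.Adj]

theorem lapMatrix_apply_eq (i j : V) :
    G.lapMatrix R i j =
      (if i = j then ∑ k, if G.Adj i k then 1 else 0 else 0) - if G.Adj i j then 1 else 0 := by
  rw [lapMatrix, Matrix.sub_apply, degMatrix, diagonal_apply, adjMatrix_apply,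
    degree_eq_sum_if_adj]

theorem lapMatrix_deleteEdges {a b : V} (hab : G.Adj a b) :
    (G.deleteEdges {s(a, b)}).lapMatrix R =
      G.lapMatrix R -
        vecMulVec (Pi.single a 1 - Pi.single b 1) (Pi.single a 1 - Pi.single b 1) := by
  ext i j
  simp only [Matrix.sub_apply, lapMatrix_apply_eq, ite_adj_eq_ite_adj_deleteEdges_add hab,
    Finset.sum_add_distrib, vecMulVec_apply, Pi.sub_apply]
  simp only [← Finset.mul_sum, Finset.sum_pi_single', Finset.mem_univ, if_true]
  by_cases hij : i = j
  · subst hij; simp only [if_true, Pi.single_apply]; split_ifs <;> simp_all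
  · simp only [hij, if_false, Pi.single_apply]; split_ifs <;> simp_all

theorem lapMatrix_augment_some_some (u v : V) :
    (augment G).lapMatrix R (some u) (some v) = (G.lapMatrix R + 1) u v := by
  simp only [lapMatrix_apply_eq, Fintype.sum_option, augment_adj_some_none,
    augment_adj_some_some, Option.some.injEq, Matrix.add_apply, one_apply, if_true]
  split_ifs <;> abel

theorem lapMatrix_augment_none_some (v : V) :
    (augment G).lapMatrix R none (some v) = -1 := by
  simp [lapMatrix_apply_eq]

end SimpleGraph

namespace SimpleGraph

variable {V : Type*} [Fintype V] [DecidableEq V] (G : SimpleGraph V) [DecidableRel G.Adj]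

theorem isUnit_det_lapMatrix_add_one : IsUnit (G.lapMatrix ℝ + 1).det :=
  (isUnit_iff_isUnit_det _).mp (PosDef.posSemidef_add (posSemidef_lapMatrix ℝ G) .one).isUnit

theorem lapMatrix_mulVec_one : G.lapMatrix ℝ *ᵥ 1 = 0 :=
  lapMatrix_mulVec_const_eq_zero G

theorem isSymm_inv_lapMatrix_add_one : (G.lapMatrix ℝ + 1)⁻¹.IsSymm :=
  ((isSymm_lapMatrix ℝ G).add isSymm_one).inv

theorem inv_lapMatrix_add_one_mulVec_one : (G.lapMatrix ℝ + 1)⁻¹ *ᵥ 1 = 1 := by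
  have h : (G.lapMatrix ℝ + 1) *ᵥ 1 = 1 := by
    rw [add_mulVec, lapMatrix_mulVec_one, one_mulVec, zero_add]
  rw [← h, mulVec_mulVec, nonsing_inv_mul _ (isUnit_det_lapMatrix_add_one G), one_mulVec, h]

theorem one_vecMul_inv_lapMatrix_add_one : 1 ᵥ* (G.lapMatrix ℝ + 1)⁻¹ = 1 := by
  rw [← (isSymm_inv_lapMatrix_add_one G).eq, vecMul_transpose, inv_lapMatrix_add_one_mulVec_one]

theorem lapMatrix_augment_mul_extendZero :
    (augment G).lapMatrix ℝ * extendZero (G.lapMatrix ℝ + 1)⁻¹ =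
      1 - vecMulVec (Pi.single none 1) 1 := by
  have hΩ := mul_nonsing_inv _ (isUnit_det_lapMatrix_add_one G)
  ext (_ | u) (_ | v)
  · simp [mul_apply]
  · simpa [mul_apply, Fintype.sum_option, lapMatrix_augment_none_some, vecMul, dotProduct] using
      congrFun (one_vecMul_inv_lapMatrix_add_one G) v
  · simp [mul_apply]
  · simpa [mul_apply, Fintype.sum_option, lapMatrix_augment_some_some, one_apply] using
      congrFun₂ hΩ u v

noncomputable def augmentPinv : Matrix (Option V) (Option V) ℝ :=
  centering (Option V) * extendZero (G.lapMatrix ℝ + 1)⁻¹ * centering (Option V)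

theorem lapMatrix_augment_mul_augmentPinv :
    (augment G).lapMatrix ℝ * augmentPinv G = centering (Option V) := by
  have hL : (augment G).lapMatrix ℝ * centering (Option V) = (augment G).lapMatrix ℝ :=
    mul_centering_of_mulVec_eq_zero (lapMatrix_mulVec_one _)
  rw [augmentPinv, ← Matrix.mul_assoc, ← Matrix.mul_assoc, hL, lapMatrix_augment_mul_extendZero,
    Matrix.sub_mul, Matrix.one_mul, vecMulVec_mul, one_vecMul_centering, vecMulVec_zero, sub_zero]

theorem isSymm_augmentPinv : (augmentPinv G).IsSymm := by
  rw [augmentPinv, IsSymm, transpose_mul, transpose_mul, isSymm_centering.eq,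
    transpose_extendZero, (isSymm_inv_lapMatrix_add_one G).eq, Matrix.mul_assoc]

theorem isMoorePenrose_augmentPinv :
    IsMoorePenrose ((augment G).lapMatrix ℝ) (augmentPinv G) := by
  refine .of_isSymm (isSymm_lapMatrix ℝ _) (isSymm_augmentPinv G) ?_ ?_ ?_ <;>
    rw [lapMatrix_augment_mul_augmentPinv]
  · exact isSymm_centering
  · refine centering_mul_of_vecMul_eq_zero ?_
    rw [← (isSymm_lapMatrix ℝ _).eq, vecMul_transpose, lapMatrix_mulVec_one]
  · rw [augmentPinv, ← Matrix.mul_assoc, ← Matrix.mul_assoc, centering_mul_centering]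

theorem augmentPinv_mulVec {x : V → ℝ} (hx : 1 ⬝ᵥ x = 0) :
    augmentPinv G *ᵥ Option.elim' 0 x = Option.elim' 0 ((G.lapMatrix ℝ + 1)⁻¹ *ᵥ x) := by
  have hsum {y : V → ℝ} (hy : 1 ⬝ᵥ y = 0) : 1 ⬝ᵥ Option.elim' 0 y = 0 := by
    simpa [dotProduct, Fintype.sum_option] using hy
  have hΩx : 1 ⬝ᵥ ((G.lapMatrix ℝ + 1)⁻¹ *ᵥ x) = 0 := by
    rw [dotProduct_mulVec, one_vecMul_inv_lapMatrix_add_one, hx]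
  rw [augmentPinv, ← mulVec_mulVec, ← mulVec_mulVec,
    centering_mulVec_of_dotProduct_eq_zero (hsum hx), extendZero_mulVec,
    centering_mulVec_of_dotProduct_eq_zero (hsum hΩx)]

variable {G} in
theorem inv_lapMatrix_deleteEdges_add_one {a b : V} (hab : G.Adj a b)
    (hr : (Pi.single a 1 - Pi.single b 1) ⬝ᵥ
      ((G.lapMatrix ℝ + 1)⁻¹ *ᵥ (Pi.single a 1 - Pi.single b 1)) ≠ 1) :
    ((G.deleteEdges {s(a, b)}).lapMatrix ℝ + 1)⁻¹ =
      (G.lapMatrix ℝ + 1)⁻¹ +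
        (1 - (Pi.single a 1 - Pi.single b 1) ⬝ᵥ
          ((G.lapMatrix ℝ + 1)⁻¹ *ᵥ (Pi.single a 1 - Pi.single b 1)))⁻¹ •
        vecMulVec ((G.lapMatrix ℝ + 1)⁻¹ *ᵥ (Pi.single a 1 - Pi.single b 1))
          ((G.lapMatrix ℝ + 1)⁻¹ *ᵥ (Pi.single a 1 - Pi.single b 1)) := by
  rw [lapMatrix_deleteEdges hab, sub_add_eq_add_sub,
    inv_sub_vecMulVec ((isUnit_iff_isUnit_det _).mpr (isUnit_det_lapMatrix_add_one G)) _ _ hr,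
    ← mulVec_transpose, (isSymm_inv_lapMatrix_add_one G).eq]

end SimpleGraph

theorem forestIndex_deleteEdges_sub_forestIndex {n : ℕ} {G : SimpleGraph (Fin n)}
    [DecidableRel G.Adj] {a b : Fin n} (hab : G.Adj a b)
    (hr : (Pi.single a 1 - Pi.single b 1) ⬝ᵥ
      ((G.lapMatrix ℝ + 1)⁻¹ *ᵥ (Pi.single a 1 - Pi.single b 1)) ≠ 1) :
    forestIndex (G.deleteEdges {s(a, b)}) - forestIndex G =
      n / (1 - (Pi.single a 1 - Pi.single b 1) ⬝ᵥ
          ((G.lapMatrix ℝ + 1)⁻¹ *ᵥ (Pi.single a 1 - Pi.single b 1))) *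
        ∑ u, ((G.lapMatrix ℝ + 1)⁻¹ *ᵥ (Pi.single a 1 - Pi.single b 1)) u ^ 2 := by
  set g := (G.lapMatrix ℝ + 1)⁻¹ *ᵥ (Pi.single a 1 - Pi.single b 1)
  set c := (1 - (Pi.single a 1 - Pi.single b 1) ⬝ᵥ g)⁻¹
  have hg : ∑ u, g u = 0 := by
    rw [← one_dotProduct, dotProduct_mulVec, SimpleGraph.one_vecMul_inv_lapMatrix_add_one]
    simp
  have hΔ : forestIndex (G.deleteEdges {s(a, b)}) - forestIndex G =
      c * ∑ u, ∑ v ∈ Finset.Ioi u, (g u - g v) ^ 2 := by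
    simp only [forestIndex, SimpleGraph.inv_lapMatrix_deleteEdges_add_one hab hr,
      ← Finset.sum_sub_distrib, Finset.mul_sum, Matrix.add_apply, Matrix.smul_apply,
      vecMulVec_apply, smul_eq_mul]
    refine Finset.sum_congr rfl fun u _ => Finset.sum_congr rfl fun v _ => ?_
    ring
  rw [hΔ, Finset.sum_sum_Ioi_sub_sq, hg, Fintype.card_fin, div_eq_inv_mul]
  ring

theorem forest_index_marginal_loss {n : ℕ} (G : SimpleGraph (Fin n))
    [DecidableRel G.Adj] (a b : Fin n) (hab : G.Adj a b)
    (M : Matrix (Option (Fin n)) (Option (Fin n)) ℝ)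
    (hM : IsMoorePenrose ((augment G).lapMatrix ℝ) M)
    (hr : M (some a) (some a) - 2 * M (some a) (some b) + M (some b) (some b) ≠ 1) :
    forestIndex (G.deleteEdges {s(a, b)}) - forestIndex G =
      ((n : ℝ) / (1 - (M (some a) (some a) - 2 * M (some a) (some b) + M (some b) (some b)))) *
          ∑ w : Option (Fin n), (M w (some a) - M w (some b)) ^ 2 -
        (((n : ℝ) + 1) / (1 - (M (some a) (some a) - 2 * M (some a) (some b) + M (some b) (some b)))) *
          (M none (some a) - M none (some b)) ^ 2 := by
  set e : Fin n → ℝ := Pi.single a 1 - Pi.single b 1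
  set g := (G.lapMatrix ℝ + 1)⁻¹ *ᵥ e
  obtain rfl := hM.unique (G.isMoorePenrose_augmentPinv)
  have hcol (w : Option (Fin n)) :
      G.augmentPinv w (some a) - G.augmentPinv w (some b) = Option.elim' 0 g w := by
    have he : Option.elim' 0 e = Pi.single (some a) 1 - Pi.single (some b) 1 := by
      ext (_ | u) <;> simp [e, Pi.single_apply]
    rw [← G.augmentPinv_mulVec (x := e) (by simp [e]), he, mulVec_sub, mulVec_single_one,
      mulVec_single_one]
    rfl
  have hr' : G.augmentPinv (some a) (some a) - 2 * G.augmentPinv (some a) (some b) +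
      G.augmentPinv (some b) (some b) = e ⬝ᵥ g := by
    have ha : _ = g a := hcol (some a)
    have hb : _ = g b := hcol (some b)
    have hsymm := G.isSymm_augmentPinv.apply (some a) (some b)
    have hea : e ⬝ᵥ g = g a - g b := by simp [e, sub_dotProduct]
    linear_combination ha - hb + hsymm - hea
  rw [hr'] at hr ⊢
  rw [forestIndex_deleteEdges_sub_forestIndex hab hr, Fintype.sum_option]
  simp only [hcol, Option.elim']
  ring
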